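/- For every closed curve γ of length 2 there exists v ∈ ℂ such that either {γ(t) + v : t ∈ [0,1]} ⊆ Δ₁ or {−γ(t) + v : t ∈ [0,1]} ⊆ Δ₁; that is, γ or its point reflection −γ can be translated into the equilateral triangle of height 1. -/

import Mathlib

open Set MeasureTheory

/-- A closed curve of length 2: continuous on `[0,1]`, closed, with total variation 2. -/
def IsClosedCurve2 (γ : ℝ → ℂ) : Prop :=
  ContinuousOn γ (Set.Icc 0 1) ∧ γ 0 = γ 1 ∧ eVariationOn γ (Set.Icc 0 1) = 2

/-- The equilateral triangle of height 1, with vertices −1/√3, 1/√3, i. -/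
noncomputable def Δ₁ : Set ℂ :=
  convexHull ℝ {((-(1 / Real.sqrt 3) : ℝ) : ℂ), ((1 / Real.sqrt 3 : ℝ) : ℂ), Complex.I}

/-!
Let `n 0, n 1, n 2` be the outer unit normals of `Δ₁` and let `M i`, `m i` be the maximum and
minimum of `⟪γ, n i⟫`. A closed curve runs across each strip `m i ≤ ⟪·, n i⟫ ≤ M i` and back, so
`2 ∑ (M i - m i)` is at most its length for the norm `∑ |⟪·, n i⟫|`, which is at most twice the
Euclidean norm because `∑ n i = 0`. Hence `∑ (M i - m i) ≤ 2`, so `∑ M i ≤ 1` or `∑ (-m i) ≤ 1`.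
Since the support numbers of `Δ₁` in the directions `n i` sum to its height `1`, a set whose
support numbers sum to at most `1` can be translated into `Δ₁`; apply this to `γ` or to `-γ`.
-/

theorem two_mul_dist_le_sum_dist_of_eq {α : Type*} [PseudoMetricSpace α] {f : ℕ → α} {N p q : ℕ}
    (hf : f 0 = f N) (hp : p ≤ N) (hq : q ≤ N) :
    2 * dist (f p) (f q) ≤ ∑ i ∈ Finset.range N, dist (f i) (f (i + 1)) := by
  wlog hpq : p ≤ q generalizing p q
  · rw [dist_comm]; exact this hq hp (le_of_not_ge hpq)
  have hsplit : ∑ i ∈ Finset.range N, dist (f i) (f (i + 1)) =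
      ∑ i ∈ Finset.Ico 0 p, dist (f i) (f (i + 1)) + ∑ i ∈ Finset.Ico p q, dist (f i) (f (i + 1))
        + ∑ i ∈ Finset.Ico q N, dist (f i) (f (i + 1)) := by
    rw [Finset.sum_Ico_consecutive _ (Nat.zero_le p) hpq,
      Finset.sum_Ico_consecutive _ (Nat.zero_le q) hq, Finset.range_eq_Ico]
  have h_around : dist (f p) (f q) ≤ dist (f 0) (f p) + dist (f q) (f N) := by
    calc dist (f p) (f q) ≤ dist (f p) (f 0) + dist (f 0) (f q) := dist_triangle _ _ _
      _ = _ := by rw [dist_comm (f p), dist_comm (f q), hf]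
  linarith [dist_le_Ico_sum_dist f (Nat.zero_le p), dist_le_Ico_sum_dist f hpq,
    dist_le_Ico_sum_dist f hq]

theorem abs_add_abs_add_abs_le_of_add_eq_zero {a b c r : ℝ} (h : a + b + c = 0)
    (ha : |a| ≤ r) (hb : |b| ≤ r) (hc : |c| ≤ r) : |a| + |b| + |c| ≤ 2 * r := by
  rcases abs_cases a with ⟨ea, _⟩ | ⟨ea, _⟩ <;> rcases abs_cases b with ⟨eb, _⟩ | ⟨eb, _⟩ <;>
    rcases abs_cases c with ⟨ec, _⟩ | ⟨ec, _⟩ <;> linarith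

theorem Finset.exists_monotone_surjOn_Iic {α : Type*} [LinearOrder α] (S : Finset α)
    (hS : S.Nonempty) :
    ∃ (N : ℕ) (u : ℕ → α), Monotone u ∧ (∀ n, u n ∈ S) ∧ Set.SurjOn u (Set.Iic N) S := by
  have hpos : 0 < S.card := hS.card_pos
  set e := S.orderIsoOfFin rfl
  refine ⟨S.card - 1, fun n => e ⟨min n (S.card - 1), by omega⟩, ?_, fun n => (e _).2, ?_⟩
  · intro m n hmn
    exact e.monotone (Fin.mk_le_mk.2 (min_le_min_right _ hmn))
  · intro x hx
    refine ⟨e.symm ⟨x, hx⟩, Nat.le_sub_one_of_lt (e.symm ⟨x, hx⟩).2, ?_⟩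
    simp [min_eq_left (Nat.le_sub_one_of_lt (e.symm ⟨x, hx⟩).2)]

theorem BoundedVariationOn.sum_dist_le {α E : Type*} [LinearOrder α] [PseudoMetricSpace E]
    {f : α → E} {s : Set α} (hf : BoundedVariationOn f s) {u : ℕ → α} (hu : Monotone u)
    (us : ∀ n, u n ∈ s) (N : ℕ) :
    ∑ i ∈ Finset.range N, dist (f (u i)) (f (u (i + 1))) ≤ (eVariationOn f s).toReal := by
  have h := ENNReal.toReal_mono hf (eVariationOn.sum_le (f := f) (n := N) hu us)
  rw [ENNReal.toReal_sum fun _ _ => edist_ne_top _ _] at h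
  simpa only [← dist_edist, dist_comm] using h

theorem BoundedVariationOn.two_mul_sum_sub_le {α E ι : Type*} [LinearOrder α]
    [PseudoMetricSpace E] [Fintype ι] {φ : ι → E → ℝ} {C : ℝ} (hC : 0 ≤ C)
    (hφ : ∀ x y, ∑ i, |φ i x - φ i y| ≤ C * dist x y) {γ : α → E} {a b : α}
    (hγ : BoundedVariationOn γ (Icc a b)) (hab : a ≤ b) (hclosed : γ a = γ b)
    {s t : ι → α} (hs : ∀ i, s i ∈ Icc a b) (ht : ∀ i, t i ∈ Icc a b) :
    2 * ∑ i, (φ i (γ (s i)) - φ i (γ (t i))) ≤ C * (eVariationOn γ (Icc a b)).toReal := by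
  classical
  obtain ⟨N, u, hu, huS, hsurj⟩ := Finset.exists_monotone_surjOn_Iic
    (insert a (insert b (Finset.univ.image s ∪ Finset.univ.image t))) (Finset.insert_nonempty _ _)
  have hu_mem : ∀ n, u n ∈ Icc a b := fun n => by
    have := huS n
    simp only [Finset.mem_insert, Finset.mem_union, Finset.mem_image, Finset.mem_univ,
      true_and] at this
    rcases this with h | h | ⟨i, h⟩ | ⟨i, h⟩
    exacts [h.symm ▸ left_mem_Icc.2 hab, h.symm ▸ right_mem_Icc.2 hab, h ▸ hs i, h ▸ ht i]
  have hit : ∀ x, x = a ∨ x = b ∨ (∃ i, s i = x) ∨ (∃ i, t i = x) → ∃ n ≤ N, u n = x :=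
    fun x hx => hsurj (by simpa using hx)
  obtain ⟨na, -, hna⟩ := hit a (by simp)
  obtain ⟨nb, hnb, hnb'⟩ := hit b (by simp)
  have hu0 : u 0 = a := le_antisymm (hna ▸ hu (Nat.zero_le na)) (hu_mem 0).1
  have huN : u N = b := le_antisymm (hu_mem N).2 (hnb' ▸ hu hnb)
  have hwidth : ∀ i, 2 * (φ i (γ (s i)) - φ i (γ (t i))) ≤
      ∑ n ∈ Finset.range N, |φ i (γ (u n)) - φ i (γ (u (n + 1)))| := by
    intro i
    obtain ⟨p, hp, hup⟩ := hit (s i) (by simp)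
    obtain ⟨q, hq, huq⟩ := hit (t i) (by simp)
    have := two_mul_dist_le_sum_dist_of_eq (f := fun n => φ i (γ (u n)))
      (by simp only [hu0, huN, hclosed]) hp hq
    simp only [Real.dist_eq, hup, huq] at this
    linarith [le_abs_self (φ i (γ (s i)) - φ i (γ (t i)))]
  calc 2 * ∑ i, (φ i (γ (s i)) - φ i (γ (t i)))
      ≤ ∑ i, ∑ n ∈ Finset.range N, |φ i (γ (u n)) - φ i (γ (u (n + 1)))| := by
        rw [Finset.mul_sum]; exact Finset.sum_le_sum fun i _ => hwidth i
    _ = ∑ n ∈ Finset.range N, ∑ i, |φ i (γ (u n)) - φ i (γ (u (n + 1)))| := Finset.sum_comm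
    _ ≤ ∑ n ∈ Finset.range N, C * dist (γ (u n)) (γ (u (n + 1))) :=
        Finset.sum_le_sum fun n _ => hφ _ _
    _ ≤ C * (eVariationOn γ (Icc a b)).toReal := by
        rw [← Finset.mul_sum]; exact mul_le_mul_of_nonneg_left (hγ.sum_dist_le hu hu_mem N) hC

open Complex

open scoped RealInnerProductSpace

theorem Complex.real_inner_eq_re_mul_add_im_mul (w z : ℂ) :
    ⟪w, z⟫ = w.re * z.re + w.im * z.im := by
  simp [Complex.inner]; ring

noncomputable def triangleNormal : Fin 3 → ℂ :=
  ![-I, ⟨√3 / 2, 1 / 2⟩, ⟨-(√3 / 2), 1 / 2⟩]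

theorem sum_triangleNormal : ∑ i, triangleNormal i = 0 := by
  simp [Fin.sum_univ_three, triangleNormal, Complex.ext_iff]
  norm_num

theorem norm_triangleNormal (i : Fin 3) : ‖triangleNormal i‖ = 1 := by
  fin_cases i <;> norm_num [triangleNormal, Complex.norm_eq_sqrt_sq_add_sq, div_pow]

theorem sum_abs_inner_triangleNormal_le (z : ℂ) :
    ∑ i, |⟪z, triangleNormal i⟫| ≤ 2 * ‖z‖ := by
  have hbound : ∀ i, |⟪z, triangleNormal i⟫| ≤ ‖z‖ := fun i => by
    simpa [norm_triangleNormal] using abs_real_inner_le_norm z (triangleNormal i)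
  have hsum : ∑ i, ⟪z, triangleNormal i⟫ = 0 := by
    rw [← inner_sum, sum_triangleNormal, inner_zero_right]
  rw [Fin.sum_univ_three] at hsum ⊢
  exact abs_add_abs_add_abs_le_of_add_eq_zero hsum (hbound 0) (hbound 1) (hbound 2)

theorem mem_Δ₁_of_inner_triangleNormal_le {z : ℂ}
    (h : ∀ i, ⟪z - I / 3, triangleNormal i⟫ ≤ 1 / 3) : z ∈ Δ₁ := by
  set p : Fin 3 → ℂ := ![I, ((-(1 / √3) : ℝ) : ℂ), ((1 / √3 : ℝ) : ℂ)]
  -- `w i` is the barycentric coordinate of the vertex `p i`, which lies opposite the side with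
  -- outer normal `triangleNormal i` at distance `1 / 3` from the incentre `I / 3`.
  set w : Fin 3 → ℝ := fun i => 1 / 3 - ⟪z - I / 3, triangleNormal i⟫
  have hp : ∀ i, p i ∈ ({((-(1 / √3) : ℝ) : ℂ), ((1 / √3 : ℝ) : ℂ), I} : Set ℂ) := by
    intro i; fin_cases i <;> simp [p]
  have hw : ∑ i, w i = 1 := by
    simp only [w, Finset.sum_sub_distrib, ← inner_sum, sum_triangleNormal, inner_zero_right]
    norm_num
  have hz : z = ∑ i, w i • p i := by
    have : √3 ≠ 0 := by positivity
    simp only [w, Complex.real_inner_eq_re_mul_add_im_mul]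
    apply Complex.ext
    · simp [p, Fin.sum_univ_three, triangleNormal]
      field_simp
      linear_combination (-6 * z.re) * Real.sq_sqrt (show (0 : ℝ) ≤ 3 by norm_num)
    · simp [p, Fin.sum_univ_three, triangleNormal]
  rw [hz]
  exact (convex_convexHull ℝ _).sum_mem (fun i _ => sub_nonneg.2 (h i)) hw
    fun i _ => subset_convexHull ℝ _ (hp i)

theorem exists_inner_triangleNormal_le (d : Fin 3 → ℝ) (hd : 0 ≤ ∑ i, d i) :
    ∃ c : ℂ, ∀ i, ⟪c, triangleNormal i⟫ ≤ d i := by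
  -- equality in the directions `n 1`, `n 2`; then `⟪c, n 0⟫ = -(d 1 + d 2)` as `∑ n i = 0`
  refine ⟨⟨(d 1 - d 2) / √3, d 1 + d 2⟩, fun i => ?_⟩
  have : √3 ≠ 0 := by positivity
  simp only [Complex.real_inner_eq_re_mul_add_im_mul]
  fin_cases i <;> simp [triangleNormal, Fin.sum_univ_three] at hd ⊢ <;> field_simp
  all_goals linarith

theorem exists_add_mem_Δ₁ (h : Fin 3 → ℝ) (hh : ∑ i, h i ≤ 1) :
    ∃ v : ℂ, ∀ z, (∀ i, ⟪z, triangleNormal i⟫ ≤ h i) → z + v ∈ Δ₁ := by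
  obtain ⟨c, hc⟩ := exists_inner_triangleNormal_le (fun i => 1 / 3 - h i) (by
    simp only [Finset.sum_sub_distrib, Finset.sum_const, Finset.card_univ, Fintype.card_fin,
      nsmul_eq_mul]
    linarith)
  refine ⟨c + I / 3, fun z hz => mem_Δ₁_of_inner_triangleNormal_le fun i => ?_⟩
  rw [add_sub_assoc, add_sub_cancel_right, inner_add_left]
  linarith [hz i, hc i]

/-- Any closed curve of length 2, or its point reflection, can be translated into Δ₁. -/
theorem closed_curve_translate_into_triangle (γ : ℝ → ℂ) (hγ : IsClosedCurve2 γ) :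
    ∃ v : ℂ, ((fun t => γ t + v) '' Set.Icc 0 1 ⊆ Δ₁) ∨
      ((fun t => -γ t + v) '' Set.Icc 0 1 ⊆ Δ₁) := by
  obtain ⟨hcont, hclosed, hvar⟩ := hγ
  have hφ : ∀ i, ContinuousOn (fun t => ⟪γ t, triangleNormal i⟫) (Icc 0 1) :=
    fun i => hcont.inner continuousOn_const
  choose tmax htmax_mem htmax using fun i =>
    isCompact_Icc.exists_isMaxOn (nonempty_Icc.2 zero_le_one) (hφ i)
  choose tmin htmin_mem htmin using fun i =>
    isCompact_Icc.exists_isMinOn (nonempty_Icc.2 zero_le_one) (hφ i)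
  have hwidth := BoundedVariationOn.two_mul_sum_sub_le (φ := fun i z => ⟪z, triangleNormal i⟫)
    zero_le_two (fun x y => by
      simpa only [← inner_sub_left, dist_eq_norm] using sum_abs_inner_triangleNormal_le (x - y))
    (by rw [BoundedVariationOn, hvar]; exact ENNReal.ofNat_ne_top) zero_le_one hclosed
    htmax_mem htmin_mem
  rw [hvar, ENNReal.toReal_ofNat, Finset.sum_sub_distrib] at hwidth
  rcases le_or_gt (∑ i, ⟪γ (tmax i), triangleNormal i⟫) 1 with hle | hgt
  · obtain ⟨v, hv⟩ := exists_add_mem_Δ₁ _ hle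
    exact ⟨v, Or.inl <| image_subset_iff.2 fun t ht => hv _ fun i => htmax i ht⟩
  · obtain ⟨v, hv⟩ := exists_add_mem_Δ₁ (fun i => -⟪γ (tmin i), triangleNormal i⟫) (by
      rw [Finset.sum_neg_distrib]; linarith)
    refine ⟨v, Or.inr <| image_subset_iff.2 fun t ht => hv _ fun i => ?_⟩
    rw [inner_neg_left]
    exact neg_le_neg (htmin i ht)
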